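/- arXiv:1010.3519 — 5 statements merged into one kernel-verified Lean document; each statement's English description precedes it below -/
import Mathlib

section
/- Stage-2 successive refinement identity: Let ρ ∈ (−1,1), 0 < D_{X1} ≤ 1, σ₁² = 1 − ρ² + ρ²·D_{X1}, and 0 < D_{Y2} ≤ σ₁². Define σ₂² = D_{X1}·((1−ρ²)² + D_{X1}·ρ²·(D_{Y2} + 1 − ρ²)) / σ₁⁴ and S = σ₁²/(D_{X1}·D_{Y2}) (which equals e^{2(R₁+R₂)} with R₁ = (1/2)log(1/D_{X1}) and R₂ = (1/2)log(σ₁²/D_{Y2})). Then σ₂²·D_{Y2}·S² − (1−ρ²)·S = ρ²; that is, the accumulated sum-rate R₁+R₂ equals the Wagner minimum sum-rate at the distortion pair (σ₂², D_{Y2}). -/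
/-!
Clearing the factor `σ₁⁴` gives `σ₂² D_{Y2} S² = ((1-ρ²)² + D_{X1} ρ² (D_{Y2} + 1 - ρ²)) / (D_{X1} D_{Y2})`,
and subtracting `(1-ρ²) S = (1-ρ²)(1-ρ² + ρ² D_{X1}) / (D_{X1} D_{Y2})` leaves exactly
`D_{X1} ρ² D_{Y2} / (D_{X1} D_{Y2}) = ρ²`.
-/

theorem stage2_successive_refinement_general (ρ DX1 DY2 : ℝ)
    (hDX1 : 0 < DX1)
    (hDY2 : 0 < DY2) (hDY2' : DY2 ≤ 1 - ρ^2 + ρ^2 * DX1) :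
    let σ1sq := 1 - ρ^2 + ρ^2 * DX1
    let σ2sq := DX1 * ((1 - ρ^2)^2 + DX1 * ρ^2 * (DY2 + 1 - ρ^2)) / σ1sq^2
    let S := σ1sq / (DX1 * DY2)
    σ2sq * DY2 * S^2 - (1 - ρ^2) * S = ρ^2 := by
  intro σ1sq σ2sq S
  have hσ1sq : σ1sq ≠ 0 := (hDY2.trans_le hDY2').ne'
  simp only [σ2sq, S]
  field_simp
  ring

theorem stage2_successive_refinement (ρ DX1 DY2 : ℝ) (hρ : |ρ| < 1)
    (hDX1 : 0 < DX1) (hDX1' : DX1 ≤ 1)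
    (hDY2 : 0 < DY2) (hDY2' : DY2 ≤ 1 - ρ^2 + ρ^2 * DX1) :
    let σ1sq := 1 - ρ^2 + ρ^2 * DX1
    let σ2sq := DX1 * ((1 - ρ^2)^2 + DX1 * ρ^2 * (DY2 + 1 - ρ^2)) / σ1sq^2
    let S := σ1sq / (DX1 * DY2)
    σ2sq * DY2 * S^2 - (1 - ρ^2) * S = ρ^2 :=
  stage2_successive_refinement_general ρ DX1 DY2 hDX1 hDY2 hDY2'
end

section
/- Stage-3 successive refinement identity: Let ρ ∈ (−1,1), 0 < D_{X1} ≤ 1, σ₁² = 1 − ρ² + ρ²·D_{X1}, 0 < D_{Y2} ≤ σ₁², σ₂² = D_{X1}·((1−ρ²)² + D_{X1}·ρ²·(D_{Y2}+1−ρ²))/σ₁⁴, and 0 < D_{X3} ≤ σ₂². Define σ₃² = D_{Y2}·(ρ²D_{X1}−ρ²+1)·[ (1−ρ²)·(ρ²·D_{X3}·D_{Y2} + (ρ²−1)²) + ρ²·D_{X1}·( D_{Y2}·(ρ²·D_{X3} − ρ² + 1) + (ρ²−1)² ) ] / ( ρ²·D_{X1}·(D_{Y2} − ρ² + 1) + (ρ²−1)²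 )², and S = σ₁²·σ₂²/(D_{X1}·D_{Y2}·D_{X3}) (which equals e^{2(R₁+R₂+R₃)}). Then D_{X3}·σ₃²·S² − (1−ρ²)·S = ρ²; that is, the total sum-rate R₁+R₂+R₃ equals the Wagner minimum sum-rate at distortion pair (D_{X3}, σ₃²). -/
/-!
Write `a = 1 - ρ²`, `r = ρ²`, `σ₁² = a + r D_{X1}` and `Q = a σ₁² + r D_{X1} D_{Y2}`, the numerator of
`σ₂²` up to the factor `D_{X1} / σ₁⁴`. Then `S = Q / (σ₁² D_{Y2} D_{X3})`, and the bracket in `σ₃²`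
collapses to `r D_{Y2} D_{X3} σ₁² + a Q`, so `D_{X3} σ₃² S² = r + a S`.
-/

theorem wagner_quadratic_identity {K : Type*} [Field K] {a r σ Q D₂ D₃ : K}
    (hσ : σ ≠ 0) (hQ : Q ≠ 0) (hD₂ : D₂ ≠ 0) (hD₃ : D₃ ≠ 0) :
    D₃ * (D₂ * σ * (r * D₂ * D₃ * σ + a * Q) / Q ^ 2) * (Q / (σ * D₂ * D₃)) ^ 2
      - a * (Q / (σ * D₂ * D₃)) = r := by
  field_simp
  ring

theorem stage3_successive_refinement_general (ρ DX1 DY2 DX3 : ℝ) (hρ : |ρ| < 1)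
    (hDX1 : 0 < DX1)
    (hDY2 : 0 < DY2)
    (hDX3 : 0 < DX3) :
    let σ1sq := 1 - ρ^2 + ρ^2 * DX1
    let σ2sq := DX1 * ((1 - ρ^2)^2 + DX1 * ρ^2 * (DY2 + 1 - ρ^2)) / σ1sq^2
    let σ3sq := DY2 * (ρ^2 * DX1 - ρ^2 + 1) *
        ((1 - ρ^2) * (ρ^2 * DX3 * DY2 + (ρ^2 - 1)^2) +
          ρ^2 * DX1 * (DY2 * (ρ^2 * DX3 - ρ^2 + 1) + (ρ^2 - 1)^2)) /
        (ρ^2 * DX1 * (DY2 - ρ^2 + 1) + (ρ^2 - 1)^2)^2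
    let S := σ1sq * σ2sq / (DX1 * DY2 * DX3)
    DX3 * σ3sq * S^2 - (1 - ρ^2) * S = ρ^2 := by
  intro σ1sq σ2sq σ3sq S
  have ha : 0 < 1 - ρ ^ 2 := sub_pos.2 ((sq_lt_one_iff_abs_lt_one ρ).2 hρ)
  have hσ1 : 0 < σ1sq := by positivity
  set Q := ρ ^ 2 * DX1 * (DY2 - ρ ^ 2 + 1) + (ρ ^ 2 - 1) ^ 2 with hQ_def
  have hQ_eq : Q = (1 - ρ ^ 2) * σ1sq + ρ ^ 2 * DX1 * DY2 := by ring
  have hQ : 0 < Q := by rw [hQ_eq]; positivity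
  have hS : S = Q / (σ1sq * DY2 * DX3) := by
    simp only [S, σ2sq]
    field_simp
    ring
  have hσ3 : σ3sq = DY2 * σ1sq * (ρ ^ 2 * DY2 * DX3 * σ1sq + (1 - ρ ^ 2) * Q) / Q ^ 2 := by
    simp only [σ3sq, σ1sq, hQ_def]
    ring
  rw [hS, hσ3]
  exact wagner_quadratic_identity hσ1.ne' hQ.ne' hDY2.ne' hDX3.ne'

theorem stage3_successive_refinement (ρ DX1 DY2 DX3 : ℝ) (hρ : |ρ| < 1)
    (hDX1 : 0 < DX1) (hDX1' : DX1 ≤ 1)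
    (hDY2 : 0 < DY2) (hDY2' : DY2 ≤ 1 - ρ^2 + ρ^2 * DX1)
    (hDX3 : 0 < DX3)
    (hDX3' : DX3 ≤ DX1 * ((1 - ρ^2)^2 + DX1 * ρ^2 * (DY2 + 1 - ρ^2)) / (1 - ρ^2 + ρ^2 * DX1)^2) :
    let σ1sq := 1 - ρ^2 + ρ^2 * DX1
    let σ2sq := DX1 * ((1 - ρ^2)^2 + DX1 * ρ^2 * (DY2 + 1 - ρ^2)) / σ1sq^2
    let σ3sq := DY2 * (ρ^2 * DX1 - ρ^2 + 1) *
        ((1 - ρ^2) * (ρ^2 * DX3 * DY2 + (ρ^2 - 1)^2) +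
          ρ^2 * DX1 * (DY2 * (ρ^2 * DX3 - ρ^2 + 1) + (ρ^2 - 1)^2)) /
        (ρ^2 * DX1 * (DY2 - ρ^2 + 1) + (ρ^2 - 1)^2)^2
    let S := σ1sq * σ2sq / (DX1 * DY2 * DX3)
    DX3 * σ3sq * S^2 - (1 - ρ^2) * S = ρ^2 :=
  stage3_successive_refinement_general ρ DX1 DY2 DX3 hρ hDX1 hDY2 hDX3
end

section
/- Distortion improvement at stage 2: Let ρ ∈ (−1,1), 0 < D_{X1} ≤ 1, σ₁² = 1 − ρ² + ρ²·D_{X1}, and 0 < D_{Y2} ≤ σ₁². Then σ₂² := D_{X1}·((1−ρ²)² + D_{X1}·ρ²·(D_{Y2} + 1 − ρ²)) / σ₁⁴ satisfies 0 < σ₂² ≤ D_{X1}, with equality σ₂² = D_{X1} if and only if ρ = 0 or D_{Y2} = σ₁². -/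
/-! With `a = 1 - ρ²` and `b = ρ² D_{X1}` we have `σ₁² = a + b`, and the numerator of `σ₂²/D_{X1}` is
`a² + a b + b D_{Y2}`, which falls short of `σ₁⁴ = (a + b)²` by exactly `b (σ₁² - D_{Y2})`. -/

namespace DiSAC2

variable {K : Type*} [Field K] (ρ D E : K)

/-- `σ₁²`, with `D = D_{X1}`. -/
def firstStageVariance : K := 1 - ρ ^ 2 + ρ ^ 2 * D

/-- `σ₂²`, with `D = D_{X1}` and `E = D_{Y2}`. -/
def secondStageVariance : K :=
  D * ((1 - ρ ^ 2) ^ 2 + D * ρ ^ 2 * (E + 1 - ρ ^ 2)) / firstStageVariance ρ D ^ 2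

theorem sub_secondStageVariance (hσ : firstStageVariance ρ D ≠ 0) :
    D - secondStageVariance ρ D E =
      (ρ * D) ^ 2 * (firstStageVariance ρ D - E) / firstStageVariance ρ D ^ 2 := by
  unfold secondStageVariance
  field_simp
  unfold firstStageVariance
  ring

variable [LinearOrder K] [IsStrictOrderedRing K] {ρ D E}

theorem firstStageVariance_pos (hρ : ρ ^ 2 < 1) (hD : 0 ≤ D) : 0 < firstStageVariance ρ D := by
  unfold firstStageVariance
  nlinarith [mul_nonneg (sq_nonneg ρ) hD]

theorem secondStageVariance_pos (hρ : ρ ^ 2 < 1) (hD : 0 < D) (hE : 0 ≤ E) :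
    0 < secondStageVariance ρ D E := by
  have hσ := firstStageVariance_pos hρ hD.le
  have ha : 0 < 1 - ρ ^ 2 := sub_pos.mpr hρ
  have hEa : 0 < E + 1 - ρ ^ 2 := by linarith
  unfold secondStageVariance
  positivity

theorem secondStageVariance_le (hρ : ρ ^ 2 < 1) (hD : 0 ≤ D) (hE : E ≤ firstStageVariance ρ D) :
    secondStageVariance ρ D E ≤ D := by
  rw [← sub_nonneg, sub_secondStageVariance ρ D E (firstStageVariance_pos hρ hD).ne']
  have hE' : 0 ≤ firstStageVariance ρ D - E := sub_nonneg.mpr hE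
  positivity

theorem secondStageVariance_eq_iff (hρ : ρ ^ 2 < 1) (hD : 0 < D) :
    secondStageVariance ρ D E = D ↔ ρ = 0 ∨ E = firstStageVariance ρ D := by
  have hσ := (firstStageVariance_pos hρ hD.le).ne'
  rw [eq_comm, ← sub_eq_zero, sub_secondStageVariance ρ D E hσ]
  simp only [div_eq_zero_iff, mul_eq_zero, pow_eq_zero_iff two_ne_zero, sub_eq_zero, hσ, hD.ne',
    or_false, eq_comm (a := firstStageVariance ρ D)]

end DiSAC2

open DiSAC2 in
theorem stage2_distortion_improvement_general (ρ DX1 DY2 : ℝ) (hρ : |ρ| < 1)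
    (hDX1 : 0 < DX1)
    (hDY2 : 0 < DY2) (hDY2' : DY2 ≤ 1 - ρ^2 + ρ^2 * DX1) :
    let σ1sq := 1 - ρ^2 + ρ^2 * DX1
    let σ2sq := DX1 * ((1 - ρ^2)^2 + DX1 * ρ^2 * (DY2 + 1 - ρ^2)) / σ1sq^2
    0 < σ2sq ∧ σ2sq ≤ DX1 ∧ (σ2sq = DX1 ↔ ρ = 0 ∨ DY2 = σ1sq) := by
  have hρ2 : ρ ^ 2 < 1 := (sq_lt_one_iff_abs_lt_one ρ).mpr hρ
  exact ⟨secondStageVariance_pos hρ2 hDX1 hDY2.le, secondStageVariance_le hρ2 hDX1.le hDY2',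
    secondStageVariance_eq_iff hρ2 hDX1⟩

theorem stage2_distortion_improvement (ρ DX1 DY2 : ℝ) (hρ : |ρ| < 1)
    (hDX1 : 0 < DX1) (hDX1' : DX1 ≤ 1)
    (hDY2 : 0 < DY2) (hDY2' : DY2 ≤ 1 - ρ^2 + ρ^2 * DX1) :
    let σ1sq := 1 - ρ^2 + ρ^2 * DX1
    let σ2sq := DX1 * ((1 - ρ^2)^2 + DX1 * ρ^2 * (DY2 + 1 - ρ^2)) / σ1sq^2
    0 < σ2sq ∧ σ2sq ≤ DX1 ∧ (σ2sq = DX1 ↔ ρ = 0 ∨ DY2 = σ1sq) :=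
  stage2_distortion_improvement_general ρ DX1 DY2 hρ hDX1 hDY2 hDY2'
end

section
/- Distortion improvement at stage 3: Let ρ ∈ (−1,1), 0 < D_{X1} ≤ 1, σ₁² = 1 − ρ² + ρ²·D_{X1}, 0 < D_{Y2} ≤ σ₁², σ₂² = D_{X1}·((1−ρ²)² + D_{X1}·ρ²·(D_{Y2}+1−ρ²))/σ₁⁴, and 0 < D_{X3} ≤ σ₂². Then σ₃², defined by σ₃² = D_{Y2}·(ρ²D_{X1}−ρ²+1)·[ (1−ρ²)·(ρ²D_{X3}D_{Y2} + (ρ²−1)²) + ρ²D_{X1}·( D_{Y2}·(ρ²D_{X3} − ρ² + 1) + (ρ²−1)² ) ] / ( ρ²D_{X1}·(D_{Y2} − ρ² + 1) + (ρ²−1)² )², satisfies 0 < σ₃² ≤ D_{Y2}. -/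
/-!
Write `s = 1 - ρ²`, `a = ρ² D_{X1}` (so `σ₁² = s + a`), `d = D_{Y2}`, `e = ρ² D_{X3}` and
`M = s² + a (d + s)`. Then `M` is the denominator of `σ₃²` and the bracket of its numerator is
`e d σ₁² + s M`, so `σ₃² = d σ₁² (e d σ₁² + s M) / M²`. The identity
`M² - σ₁² (e d σ₁² + s M) = d (a M - e σ₁⁴)` shows that `σ₃² ≤ d` is equivalent to
`e σ₁⁴ ≤ a M`, which is the constraint `D_{X3} ≤ σ₂²` multiplied by `ρ² σ₁⁴`.
-/

namespace DiSAC2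

def stage3Denom (s a d : ℝ) : ℝ := s ^ 2 + a * (d + s)

noncomputable def stage3Variance (s a d e : ℝ) : ℝ :=
  d * (s + a) * (e * d * (s + a) + s * stage3Denom s a d) / stage3Denom s a d ^ 2

variable {s a d e : ℝ}

lemma stage3Denom_pos (hs : 0 < s) (ha : 0 ≤ a) (hd : 0 ≤ d) : 0 < stage3Denom s a d := by
  unfold stage3Denom; positivity

lemma stage3Denom_sq_sub (s a d e : ℝ) :
    stage3Denom s a d ^ 2 - (s + a) * (e * d * (s + a) + s * stage3Denom s a d) =
      d * (a * stage3Denom s a d - e * (s + a) ^ 2) := by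
  unfold stage3Denom; ring

lemma stage3Variance_pos (hs : 0 < s) (ha : 0 ≤ a) (hd : 0 < d) (he : 0 ≤ e) :
    0 < stage3Variance s a d e := by
  have hM := stage3Denom_pos hs ha hd.le
  unfold stage3Variance; positivity

lemma stage3Variance_le_iff (hs : 0 < s) (ha : 0 ≤ a) (hd : 0 < d) :
    stage3Variance s a d e ≤ d ↔ e * (s + a) ^ 2 ≤ a * stage3Denom s a d := by
  have hM := stage3Denom_pos hs ha hd.le
  rw [stage3Variance, div_le_iff₀ (by positivity), mul_assoc, mul_le_mul_iff_right₀ hd,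
    ← sub_nonneg, stage3Denom_sq_sub, mul_nonneg_iff_of_pos_left hd, sub_nonneg]

end DiSAC2

open DiSAC2 in
theorem stage3_distortion_improvement_general (ρ DX1 DY2 DX3 : ℝ) (hρ : |ρ| < 1)
    (hDX1 : 0 < DX1)
    (hDY2 : 0 < DY2)
    (hDX3 : 0 < DX3)
    (hDX3' : DX3 ≤ DX1 * ((1 - ρ^2)^2 + DX1 * ρ^2 * (DY2 + 1 - ρ^2)) / (1 - ρ^2 + ρ^2 * DX1)^2) :
    let σ3sq := DY2 * (ρ^2 * DX1 - ρ^2 + 1) *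
        ((1 - ρ^2) * (ρ^2 * DX3 * DY2 + (ρ^2 - 1)^2) +
          ρ^2 * DX1 * (DY2 * (ρ^2 * DX3 - ρ^2 + 1) + (ρ^2 - 1)^2)) /
        (ρ^2 * DX1 * (DY2 - ρ^2 + 1) + (ρ^2 - 1)^2)^2
    0 < σ3sq ∧ σ3sq ≤ DY2 := by
  intro σ3sq
  have hs : 0 < 1 - ρ ^ 2 := sub_pos.mpr ((sq_lt_one_iff_abs_lt_one ρ).mpr hρ)
  have ha : 0 ≤ ρ ^ 2 * DX1 := by positivity
  have hσ3sq : σ3sq = stage3Variance (1 - ρ ^ 2) (ρ ^ 2 * DX1) DY2 (ρ ^ 2 * DX3) := by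
    simp only [σ3sq, stage3Variance, stage3Denom]; ring
  have hσ₂ : ρ ^ 2 * DX3 * (1 - ρ ^ 2 + ρ ^ 2 * DX1) ^ 2 ≤
      ρ ^ 2 * DX1 * stage3Denom (1 - ρ ^ 2) (ρ ^ 2 * DX1) DY2 := by
    rw [le_div_iff₀ (by positivity)] at hDX3'
    have := mul_le_mul_of_nonneg_left hDX3' (sq_nonneg ρ)
    unfold stage3Denom; linarith
  rw [hσ3sq]
  exact ⟨stage3Variance_pos hs ha hDY2 (by positivity),
    (stage3Variance_le_iff hs ha hDY2).mpr hσ₂⟩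

theorem stage3_distortion_improvement (ρ DX1 DY2 DX3 : ℝ) (hρ : |ρ| < 1)
    (hDX1 : 0 < DX1) (hDX1' : DX1 ≤ 1)
    (hDY2 : 0 < DY2) (hDY2' : DY2 ≤ 1 - ρ^2 + ρ^2 * DX1)
    (hDX3 : 0 < DX3)
    (hDX3' : DX3 ≤ DX1 * ((1 - ρ^2)^2 + DX1 * ρ^2 * (DY2 + 1 - ρ^2)) / (1 - ρ^2 + ρ^2 * DX1)^2) :
    let σ3sq := DY2 * (ρ^2 * DX1 - ρ^2 + 1) *
        ((1 - ρ^2) * (ρ^2 * DX3 * DY2 + (ρ^2 - 1)^2) +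
          ρ^2 * DX1 * (DY2 * (ρ^2 * DX3 - ρ^2 + 1) + (ρ^2 - 1)^2)) /
        (ρ^2 * DX1 * (DY2 - ρ^2 + 1) + (ρ^2 - 1)^2)^2
    0 < σ3sq ∧ σ3sq ≤ DY2 :=
  stage3_distortion_improvement_general ρ DX1 DY2 DX3 hρ hDX1 hDY2 hDX3 hDX3'
end

section
/- Feasibility of the symmetric distortion point: For every ρ ∈ (−1,1) and every D ∈ (0,1), there exists D_{X1} ∈ (0,1] such that, with σ₁² = 1 − ρ² + ρ²·D_{X1}, one has D ≤ σ₁² and σ₂²(D_{X1}, D) = D, where σ₂²(D_{X1}, D_{Y2}) = D_{X1}·((1−ρ²)² + D_{X1}·ρ²·(D_{Y2} + 1 − ρ²))/σ₁⁴. That is, the symmetric distortion pair (D_{X2}, D_{Y2}) = (D, D) is always achievable at the second stage of DiSAC2, regardless of ρ. -/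
/-!
Write `a = ρ²` and `σ₁² = 1 - a + a t`. Clearing `σ₁⁴` and the factor `1 - a` turns
`σ₂²(t, D) = D` into a quadratic equation `q(t) = 0` with `q(0) = -D(1 - a) < 0 < 1 - D = q(1)`,
so it has a root `t ∈ (0, 1)`. At a root, `D σ₁² (σ₁² - t) = t (1 - a) (σ₁² - D)`, and since
`σ₁² ≥ t` the left side is nonnegative, which forces `D ≤ σ₁²`.
-/

open Set

/-- `σ₂²(t, D) = D` with `σ₁⁴` cleared and `1 - a` cancelled, for `a = ρ²`. -/
def stage2Quadratic (a D t : ℝ) : ℝ :=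
  a * (D + 1) * t ^ 2 + (1 - a - 2 * D * a) * t - D * (1 - a)

section

variable {a D t : ℝ}

lemma exists_stage2Quadratic_eq_zero (ha : a < 1) (hD : 0 < D) (hD' : D < 1) :
    ∃ t ∈ Ioo (0 : ℝ) 1, stage2Quadratic a D t = 0 := by
  have hcont : ContinuousOn (stage2Quadratic a D) (Icc 0 1) := by
    unfold stage2Quadratic; fun_prop
  have hzero : (0 : ℝ) ∈ Ioo (stage2Quadratic a D 0) (stage2Quadratic a D 1) := by
    constructor <;> simp only [stage2Quadratic] <;> nlinarith
  exact intermediate_value_Ioo zero_le_one hcont hzero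

lemma stage2Quadratic_eq_zero_iff (ha : a < 1) (hσ : 0 < 1 - a + a * t) :
    stage2Quadratic a D t = 0 ↔
      t * ((1 - a) ^ 2 + t * a * (D + 1 - a)) / (1 - a + a * t) ^ 2 = D := by
  have hb : (1 - a) ≠ 0 := by linarith
  rw [div_eq_iff (by positivity), ← sub_eq_zero, ← mul_eq_zero_iff_left hb, stage2Quadratic]
  constructor <;> intro h <;> linear_combination h

lemma le_of_stage2Quadratic_eq_zero (ha₀ : 0 ≤ a) (ha : a < 1) (hD : 0 < D)
    (ht₀ : 0 < t) (ht₁ : t ≤ 1) (hq : stage2Quadratic a D t = 0) :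
    D ≤ 1 - a + a * t := by
  set σ := 1 - a + a * t
  have hσt : t ≤ σ := by nlinarith
  have key : t * (1 - a) * (σ - D) = D * σ * (σ - t) := by
    simp only [stage2Quadratic] at hq
    linear_combination (1 - a) * hq
  have hrhs : 0 ≤ D * σ * (σ - t) := by
    have : 0 < σ := by linarith
    positivity
  have htb : 0 < t * (1 - a) := mul_pos ht₀ (by linarith)
  nlinarith

end

theorem symmetric_point_feasible (ρ D : ℝ) (hρ : |ρ| < 1) (hD : 0 < D) (hD' : D < 1) :
    ∃ DX1 : ℝ, 0 < DX1 ∧ DX1 ≤ 1 ∧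
      D ≤ 1 - ρ^2 + ρ^2 * DX1 ∧
      DX1 * ((1 - ρ^2)^2 + DX1 * ρ^2 * (D + 1 - ρ^2)) / (1 - ρ^2 + ρ^2 * DX1)^2 = D := by
  have ha : ρ ^ 2 < 1 := (sq_lt_one_iff_abs_lt_one ρ).mpr hρ
  obtain ⟨t, ⟨ht₀, ht₁⟩, hq⟩ := exists_stage2Quadratic_eq_zero ha hD hD'
  have hσD := le_of_stage2Quadratic_eq_zero (sq_nonneg ρ) ha hD ht₀ ht₁.le hq
  exact ⟨t, ht₀, ht₁.le, hσD, (stage2Quadratic_eq_zero_iff ha (by linarith)).mp hq⟩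
end
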